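/- arXiv:2303.07140 — 3 statements merged into one kernel-verified Lean document; each statement's English description precedes it below -/
import Mathlib

section
/- Let N ≥ 2 agents x_i : ℝ → ℝ^d evolve by ẋ_i(t) = (1/(N−1)) Σ_{j≠i} ψ_{ij}(t) (x_j(t − τ_{ij}(t)) − x_i(t)) with weights 0 ≤ ψ_{ij}(t) ≤ 1 and delays 0 ≤ τ_{ij}(t) ≤ τ. Fix a unit vector y ∈ ℝ^d and n ∈ ℕ. Define M_n^y = max over s ∈ [(n−1)τ, nτ] and j ∈ [N] of ⟨x_j(s), y⟩, and m_n^y the corresponding minimum. Then for all t ≥ (n−1)τ and all i, m_n^y ≤ ⟨x_i(t), y⟩ ≤ M_n^y. -/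
open Set Filter Topology

theorem hk_aux {d N : ℕ} (hN : 2 ≤ N) (τ : ℝ) (hτ : 0 < τ)
    (x : Fin N → ℝ → EuclideanSpace ℝ (Fin d))
    (ψ : Fin N → Fin N → ℝ → ℝ) (τd : Fin N → Fin N → ℝ → ℝ)
    (hxc : ∀ i, Continuous (x i))
    (hψ : ∀ i j t, 0 ≤ t → ψ i j t ∈ Icc (0 : ℝ) 1)
    (hτd : ∀ i j t, 0 ≤ t → τd i j t ∈ Icc (0 : ℝ) τ)
    (hode : ∀ i, ∀ t : ℝ, 0 ≤ t →
      HasDerivAt (x i)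
        (((N : ℝ) - 1)⁻¹ • ∑ j ∈ Finset.univ.erase i,
          ψ i j t • (x j (t - τd i j t) - x i t)) t)
    (y : EuclideanSpace ℝ (Fin d)) (n : ℕ) :
    ∀ i, ∀ t : ℝ, ((n : ℝ) - 1) * τ ≤ t →
      @inner ℝ _ _ (x i t) y ≤
        sSup {r : ℝ | ∃ j, ∃ s ∈ Icc (((n : ℝ) - 1) * τ) ((n : ℝ) * τ),
          r = @inner ℝ _ _ (x j s) y} := by
  set a : ℝ := ((n : ℝ) - 1) * τ with ha
  set b : ℝ := (n : ℝ) * τ with hb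
  have hab : a + τ = b := by rw [ha, hb]; ring
  have haltb : a < b := by linarith
  have hb0 : 0 ≤ b := mul_nonneg (Nat.cast_nonneg n) hτ.le
  set f : Fin N → ℝ → ℝ := fun i t => @inner ℝ _ _ (x i t) y with hf
  have hfc : ∀ i, Continuous (f i) := fun i => (hxc i).inner continuous_const
  set S : Set ℝ := {r : ℝ | ∃ j, ∃ s ∈ Icc a b, r = f j s} with hS
  have hNpos : 0 < N := lt_of_lt_of_le two_pos hN
  have hne : (Finset.univ : Finset (Fin N)).Nonempty := ⟨⟨0, hNpos⟩, Finset.mem_univ _⟩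
  have hBj : ∀ j : Fin N, ∀ s ∈ Icc a b, f j s ≤ sSup (f j '' Icc a b) := by
    intro j s hs
    exact le_csSup (isCompact_Icc.image (hfc j)).bddAbove ⟨s, hs, rfl⟩
  have hbdd : BddAbove S := by
    refine ⟨Finset.univ.sup' hne (fun j => sSup (f j '' Icc a b)), ?_⟩
    rintro r ⟨j, s, hs, rfl⟩
    exact le_trans (hBj j s hs) (Finset.le_sup' (fun j => sSup (f j '' Icc a b)) (Finset.mem_univ j))
  set M : ℝ := sSup S with hM
  have step1 : ∀ j : Fin N, ∀ s ∈ Icc a b, f j s ≤ M := by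
    intro j s hs
    exact le_csSup hbdd ⟨j, s, hs, rfl⟩
  -- main barrier step
  have step2 : ∀ ε : ℝ, 0 < ε → ∀ i : Fin N, ∀ t : ℝ, b ≤ t →
      f i t < M + ε * (1 + t - b) := by
    intro ε hε
    by_contra hcon
    push_neg at hcon
    obtain ⟨i0, t0, hbt0, ht0⟩ := hcon
    set A : Set ℝ := {t : ℝ | b ≤ t ∧ ∃ i, M + ε * (1 + t - b) ≤ f i t} with hA
    have hAne : A.Nonempty := ⟨t0, hbt0, i0, ht0⟩
    have hAbdd : BddBelow A := ⟨b, fun t ht => ht.1⟩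
    have hAcl : IsClosed A := by
      have hphic : Continuous (fun s : ℝ => M + ε * (1 + s - b)) :=
        continuous_const.add (continuous_const.mul
          ((continuous_const.add continuous_id).sub continuous_const))
      have : A = Ici b ∩ ⋃ i : Fin N, {t : ℝ | M + ε * (1 + t - b) ≤ f i t} := by
        ext t
        constructor
        · rintro ⟨h1, i, h2⟩; exact ⟨h1, Set.mem_iUnion.mpr ⟨i, h2⟩⟩
        · rintro ⟨h1, h2⟩
          obtain ⟨i, h2⟩ := Set.mem_iUnion.mp h2
          exact ⟨h1, i, h2⟩
      rw [this]
      refine isClosed_Ici.inter (isClosed_iUnion_of_finite fun i => ?_)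
      exact isClosed_le hphic (hfc i)
    set T : ℝ := sInf A with hT
    have hTA : T ∈ A := hAcl.csInf_mem hAne hAbdd
    obtain ⟨hbT, i, hiT⟩ := hTA
    have hT0 : 0 ≤ T := le_trans hb0 hbT
    have hbltT : b < T := by
      rcases lt_or_eq_of_le hbT with h | h
      · exact h
      · exfalso
        have h1 : f i b ≤ M := step1 i b ⟨by linarith, le_refl b⟩
        rw [← h] at hiT
        simp at hiT
        linarith
    have hbefore : ∀ s ∈ Ico b T, ∀ j, f j s < M + ε * (1 + s - b) := by
      intro s hs j
      by_contra hle
      push_neg at hle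
      have : T ≤ s := csInf_le hAbdd ⟨hs.1, j, hle⟩
      exact absurd hs.2 (not_lt.mpr this)
    have hTle : ∀ j, f j T ≤ M + ε * (1 + T - b) := by
      intro j
      have hmem : Ioo b T ∈ 𝓝[<] T := Ioo_mem_nhdsLT_of_mem ⟨hbltT, le_refl T⟩
      have hphic : Continuous (fun s : ℝ => M + ε * (1 + s - b)) :=
        continuous_const.add (continuous_const.mul
          ((continuous_const.add continuous_id).sub continuous_const))
      have ht1 : Tendsto (f j) (𝓝[<] T) (𝓝 (f j T)) :=
        ((hfc j).tendsto T).mono_left nhdsWithin_le_nhds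
      have ht2 : Tendsto (fun s : ℝ => M + ε * (1 + s - b)) (𝓝[<] T)
          (𝓝 (M + ε * (1 + T - b))) :=
        (hphic.tendsto T).mono_left nhdsWithin_le_nhds
      refine le_of_tendsto_of_tendsto ht1 ht2 ?_
      filter_upwards [hmem] with s hsmem
      exact (hbefore s ⟨hsmem.1.le, hsmem.2⟩ j).le
    have hfiT : f i T = M + ε * (1 + T - b) := le_antisymm (hTle i) hiT
    -- all relevant past values are ≤ f i T
    have hpast : ∀ j, ∀ s ∈ Icc a T, f j s ≤ M + ε * (1 + T - b) := by
      intro j s hs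
      rcases le_or_gt s b with h | h
      · have := step1 j s ⟨hs.1, h⟩
        nlinarith
      · rcases lt_or_eq_of_le hs.2 with h2 | h2
        · have := hbefore s ⟨h.le, h2⟩ j
          nlinarith
        · rw [h2]; exact hTle j
    -- the derivative of f i at T
    set v : EuclideanSpace ℝ (Fin d) :=
      ((N : ℝ) - 1)⁻¹ • ∑ j ∈ Finset.univ.erase i,
        ψ i j T • (x j (T - τd i j T) - x i T) with hv
    have hD : HasDerivAt (f i) (@inner ℝ _ _ v y) T := by
      have h := (hode i T hT0).inner (𝕜 := ℝ) (hasDerivAt_const T y)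
      simp only [inner_zero_right, zero_add] at h
      exact h
    have hDle : @inner ℝ _ _ v y ≤ 0 := by
      have hvy : @inner ℝ _ _ v y = ((N : ℝ) - 1)⁻¹ *
          ∑ j ∈ Finset.univ.erase i,
            ψ i j T * (f j (T - τd i j T) - f i T) := by
        rw [hv]
        simp only [real_inner_smul_left, sum_inner, inner_sub_left, hf]
      rw [hvy]
      have hc : (0:ℝ) ≤ ((N : ℝ) - 1)⁻¹ := by
        have h2 : (2:ℝ) ≤ (N:ℝ) := by exact_mod_cast hN
        exact inv_nonneg.mpr (by linarith)
      refine mul_nonpos_iff.mpr (Or.inl ⟨hc, Finset.sum_nonpos fun j hj => ?_⟩)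
      have hψj := hψ i j T hT0
      have hτj := hτd i j T hT0
      have hsmem : T - τd i j T ∈ Icc a T := by
        constructor
        · linarith [hτj.2]
        · linarith [hτj.1]
      have := hpast j _ hsmem
      rw [hfiT]
      exact mul_nonpos_iff.mpr (Or.inl ⟨hψj.1, by linarith⟩)
    -- derivative of the gap g
    set g : ℝ → ℝ := fun t => f i t - (M + ε * (1 + t - b)) with hg
    have hgT : g T = 0 := by rw [hg]; simp [hfiT]
    have hgD : HasDerivAt g (@inner ℝ _ _ v y - ε) T := by
      have h2 : HasDerivAt (fun t : ℝ => M + ε * (1 + t - b)) ε T := by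
        have := ((((hasDerivAt_id T).const_add (1:ℝ)).sub_const b).const_mul ε).const_add M
        simpa using this
      exact hD.sub h2
    have hslope : Tendsto (slope g T) (𝓝[<] T) (𝓝 (@inner ℝ _ _ v y - ε)) :=
      (hasDerivAt_iff_tendsto_slope.mp hgD).mono_left
        (nhdsWithin_mono T fun t ht => ne_of_lt ht)
    have hge : (0:ℝ) ≤ @inner ℝ _ _ v y - ε := by
      refine ge_of_tendsto hslope ?_
      filter_upwards [Ioo_mem_nhdsLT_of_mem (⟨hbltT, le_refl T⟩ : T ∈ Ioc b T)]
        with s hsmem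
      have hgs : g s < 0 := by
        have := hbefore s ⟨hsmem.1.le, hsmem.2⟩ i
        rw [hg]; simp; linarith
      have : slope g T s = g s / (s - T) := by
        rw [slope_def_field, hgT]; ring_nf
      rw [this]
      exact le_of_lt (div_pos_iff.mpr (Or.inr ⟨hgs, by linarith [hsmem.2]⟩))
    linarith
  -- conclude
  intro i t hat
  rcases le_or_gt t b with h | h
  · exact step1 i t ⟨hat, h⟩
  · have h1 : (0:ℝ) < 1 + t - b := by linarith
    refine le_of_forall_pos_le_add fun ε hε => ?_
    have := step2 (ε / (1 + t - b)) (div_pos hε h1) i t h.le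
    have h2 : ε / (1 + t - b) * (1 + t - b) = ε := div_mul_cancel₀ ε (ne_of_gt h1)
    calc f i t ≤ M + ε / (1 + t - b) * (1 + t - b) := this.le
      _ = M + ε := by rw [h2]

/-- Invariance of the convex hull of projections for the delayed
Hegselmann–Krause system. -/
theorem hk_projection_invariance {d N : ℕ} (hN : 2 ≤ N) (τ : ℝ) (hτ : 0 < τ)
    (x : Fin N → ℝ → EuclideanSpace ℝ (Fin d))
    (ψ : Fin N → Fin N → ℝ → ℝ) (τd : Fin N → Fin N → ℝ → ℝ)
    (hxc : ∀ i, Continuous (x i))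
    (hψ : ∀ i j t, 0 ≤ t → ψ i j t ∈ Icc (0 : ℝ) 1)
    (hψc : ∀ i j, Continuous (ψ i j))
    (hτd : ∀ i j t, 0 ≤ t → τd i j t ∈ Icc (0 : ℝ) τ)
    (hτdc : ∀ i j, Continuous (τd i j))
    (hode : ∀ i, ∀ t : ℝ, 0 ≤ t →
      HasDerivAt (x i)
        (((N : ℝ) - 1)⁻¹ • ∑ j ∈ Finset.univ.erase i,
          ψ i j t • (x j (t - τd i j t) - x i t)) t)
    (y : EuclideanSpace ℝ (Fin d)) (hy : ‖y‖ = 1) (n : ℕ) :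
    ∀ i, ∀ t : ℝ, ((n : ℝ) - 1) * τ ≤ t →
      sInf {r : ℝ | ∃ j, ∃ s ∈ Icc (((n : ℝ) - 1) * τ) ((n : ℝ) * τ),
          r = @inner ℝ _ _ (x j s) y} ≤ @inner ℝ _ _ (x i t) y ∧
      @inner ℝ _ _ (x i t) y ≤
        sSup {r : ℝ | ∃ j, ∃ s ∈ Icc (((n : ℝ) - 1) * τ) ((n : ℝ) * τ),
          r = @inner ℝ _ _ (x j s) y} := by
  intro i t ht
  refine ⟨?_, hk_aux hN τ hτ x ψ τd hxc hψ hτd hode y n i t ht⟩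
  have haux := hk_aux hN τ hτ x ψ τd hxc hψ hτd hode (-y) n i t ht
  set S : Set ℝ := {r : ℝ | ∃ j, ∃ s ∈ Icc (((n : ℝ) - 1) * τ) ((n : ℝ) * τ),
      r = @inner ℝ _ _ (x j s) y} with hS
  have hTS : {r : ℝ | ∃ j, ∃ s ∈ Icc (((n : ℝ) - 1) * τ) ((n : ℝ) * τ),
      r = @inner ℝ _ _ (x j s) (-y)} = -S := by
    ext r
    simp only [hS, Set.mem_neg, Set.mem_setOf_eq, inner_neg_right]
    constructor
    · rintro ⟨j, s, hs, rfl⟩; exact ⟨j, s, hs, by ring⟩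
    · rintro ⟨j, s, hs, h⟩; exact ⟨j, s, hs, by linarith⟩
  rw [hTS] at haux
  rw [inner_neg_right] at haux
  have : sInf S = -sSup (-S) := Real.sInf_def S
  linarith
end

section
/- Let x_i solve the delayed Hegselmann–Krause system with delays bounded by τ and weights in [0,1]. Then for every unit vector y ∈ ℝ^d, all i, j ∈ [N], and all s, t ∈ [nτ, (n+2)τ], one has ⟨x_i((n+2)τ) − x_j((n+2)τ), y⟩ ≤ e^{−2τ}⟨x_i(t) − x_j(s), y⟩ + (1 − e^{−2τ}) K_n, where K_n = max_{s,t ∈ [(n−1)τ, nτ]} max_{i,j} |x_i(s) − x_j(t)|. -/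
open Set

/-- Two-window diameter `K n` of the agent group over the time window
`[(n-1)τ, nτ]`. -/
noncomputable def winDiam {d N : ℕ} (x : Fin N → ℝ → EuclideanSpace ℝ (Fin d))
    (τ : ℝ) (n : ℕ) : ℝ :=
  sSup {r : ℝ | ∃ i j, ∃ s ∈ Icc (((n : ℝ) - 1) * τ) ((n : ℝ) * τ),
    ∃ t ∈ Icc (((n : ℝ) - 1) * τ) ((n : ℝ) * τ), r = ‖x i s - x j t‖}


lemma bdd_above_helper {N : ℕ} (g : Fin N → ℝ → ℝ) (hg : ∀ i, Continuous (g i)) (lo hi : ℝ) :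
    BddAbove {r : ℝ | ∃ i, ∃ σ ∈ Icc lo hi, r = g i σ} := by
  have he : {r : ℝ | ∃ i, ∃ σ ∈ Icc lo hi, r = g i σ} = ⋃ i, g i '' Icc lo hi := by
    ext r
    simp only [mem_setOf_eq, mem_iUnion, Set.mem_image]
    constructor
    · rintro ⟨i, σ, hσ, rfl⟩; exact ⟨i, σ, hσ, rfl⟩
    · rintro ⟨i, σ, hσ, rfl⟩; exact ⟨i, σ, hσ, rfl⟩
  rw [he]
  exact (isCompact_iUnion fun i => isCompact_Icc.image (hg i)).bddAbove

lemma bdd_above_helper2 {N : ℕ} (g : Fin N → Fin N → ℝ → ℝ → ℝ)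
    (hg : ∀ i j, Continuous fun q : ℝ × ℝ => g i j q.1 q.2) (lo hi : ℝ) :
    BddAbove {r : ℝ | ∃ i j, ∃ s ∈ Icc lo hi, ∃ t ∈ Icc lo hi, r = g i j s t} := by
  have he : {r : ℝ | ∃ i j, ∃ s ∈ Icc lo hi, ∃ t ∈ Icc lo hi, r = g i j s t} =
      ⋃ p : Fin N × Fin N, (fun q : ℝ × ℝ => g p.1 p.2 q.1 q.2) '' (Icc lo hi ×ˢ Icc lo hi) := by
    ext r
    simp only [mem_setOf_eq, mem_iUnion, Set.mem_image, Prod.exists, mem_prod]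
    constructor
    · rintro ⟨i, j, s, hs, t, ht, rfl⟩; exact ⟨i, j, s, t, ⟨hs, ht⟩, rfl⟩
    · rintro ⟨i, j, s, t, ⟨hs, ht⟩, rfl⟩; exact ⟨i, j, s, hs, t, ht, rfl⟩
  rw [he]
  exact (isCompact_iUnion fun p : Fin N × Fin N =>
    (isCompact_Icc.prod isCompact_Icc).image (hg p.1 p.2)).bddAbove


lemma gronwall_upper {f f' : ℝ → ℝ} {C t₁ t₂ : ℝ} (h12 : t₁ ≤ t₂)
    (hd : ∀ t ∈ Icc t₁ t₂, HasDerivAt f (f' t) t)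
    (hb : ∀ t ∈ Icc t₁ t₂, f' t ≤ C - f t) :
    f t₂ ≤ C - Real.exp (-(t₂ - t₁)) * (C - f t₁) := by
  set g : ℝ → ℝ := fun t => Real.exp t * (f t - C) with hgdef
  have hgd : ∀ t ∈ Icc t₁ t₂,
      HasDerivAt g (Real.exp t * (f t - C) + Real.exp t * f' t) t := by
    intro t ht
    exact ((Real.hasDerivAt_exp t).mul ((hd t ht).sub_const C))
  have hanti : AntitoneOn g (Icc t₁ t₂) := by
    apply antitoneOn_of_deriv_nonpos (convex_Icc _ _)
    · exact HasDerivAt.continuousOn hgd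
    · intro t ht
      exact ((hgd t (interior_subset ht)).differentiableAt).differentiableWithinAt
    · intro t ht
      rw [interior_Icc] at ht
      have ht' : t ∈ Icc t₁ t₂ := Ioo_subset_Icc_self ht
      rw [(hgd t ht').deriv]
      have := hb t ht'
      nlinarith [Real.exp_pos t]
  have key : Real.exp t₂ * (f t₂ - C) ≤ Real.exp t₁ * (f t₁ - C) :=
    hanti (left_mem_Icc.mpr h12) (right_mem_Icc.mpr h12) h12
  have h2 := Real.exp_pos t₂
  have hinv : (0:ℝ) < (Real.exp t₂)⁻¹ := by positivity
  have key2 : f t₂ - C ≤ Real.exp t₁ * (Real.exp t₂)⁻¹ * (f t₁ - C) := by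
    calc f t₂ - C = Real.exp t₂ * (f t₂ - C) * (Real.exp t₂)⁻¹ := by
          field_simp
      _ ≤ Real.exp t₁ * (f t₁ - C) * (Real.exp t₂)⁻¹ :=
          mul_le_mul_of_nonneg_right key hinv.le
      _ = Real.exp t₁ * (Real.exp t₂)⁻¹ * (f t₁ - C) := by ring
  rw [show -(t₂ - t₁) = t₁ - t₂ by ring, Real.exp_sub, div_eq_mul_inv]
  linarith


lemma psi_term_bound {p v u C : ℝ} (h0 : 0 ≤ p) (h1 : p ≤ 1) (hv : v ≤ C) (hu : u ≤ C) :
    p * (v - u) ≤ C - u := by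
  rcases le_total v u with h | h
  · nlinarith
  · nlinarith

lemma hk_decay {d N : ℕ} (hN : 2 ≤ N) {τ : ℝ} (hτ : 0 < τ)
    (x : Fin N → ℝ → EuclideanSpace ℝ (Fin d))
    (ψ τd : Fin N → Fin N → ℝ → ℝ)
    (hxc : ∀ i, Continuous (x i))
    (hψ : ∀ i j t, 0 ≤ t → ψ i j t ∈ Icc (0 : ℝ) 1)
    (hτd : ∀ i j t, 0 ≤ t → τd i j t ∈ Icc (0 : ℝ) τ)
    (hode : ∀ i, ∀ t : ℝ, 0 ≤ t →
      HasDerivAt (x i)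
        (((N : ℝ) - 1)⁻¹ • ∑ j ∈ Finset.univ.erase i,
          ψ i j t • (x j (t - τd i j t) - x i t)) t)
    (y : EuclideanSpace ℝ (Fin d)) (n : ℕ) (M : ℝ)
    (hM : ∀ i, ∀ σ ∈ Icc (((n : ℝ) - 1) * τ) ((n : ℝ) * τ), @inner ℝ _ _ (x i σ) y ≤ M) :
    (∀ i, ∀ t ∈ Icc ((n : ℝ) * τ) (((n : ℝ) + 2) * τ), @inner ℝ _ _ (x i t) y ≤ M) ∧
    (∀ i, ∀ t ∈ Icc ((n : ℝ) * τ) (((n : ℝ) + 2) * τ),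
      @inner ℝ _ _ (x i (((n : ℝ) + 2) * τ)) y ≤
        M - Real.exp (-((((n : ℝ) + 2) * τ) - t)) * (M - @inner ℝ _ _ (x i t) y)) := by
  set A : ℝ := (n : ℝ) * τ with hA
  set T : ℝ := ((n : ℝ) + 2) * τ with hT
  have hA0 : (0 : ℝ) ≤ A := by positivity
  have hAT : A ≤ T := by nlinarith
  set a : Fin N → ℝ → ℝ := fun i t => @inner ℝ _ _ (x i t) y with ha
  have hac : ∀ i, Continuous (a i) := fun i => (hxc i).inner continuous_const
  have hN1 : (1 : ℝ) ≤ (N : ℝ) - 1 := by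
    have : (2 : ℝ) ≤ (N : ℝ) := by exact_mod_cast hN
    linarith
  have hN1' : ((N : ℝ) - 1) ≠ 0 := by linarith
  -- derivative of a i
  have hader : ∀ i, ∀ t : ℝ, 0 ≤ t →
      HasDerivAt (a i)
        (((N : ℝ) - 1)⁻¹ * ∑ j ∈ Finset.univ.erase i,
          ψ i j t * (a j (t - τd i j t) - a i t)) t := by
    intro i t ht
    have h := (hode i t ht).inner ℝ (hasDerivAt_const t y)
    simp only [inner_zero_right, add_zero, real_inner_smul_left, sum_inner,
      inner_sub_left] at h
    rw [zero_add] at h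
    exact h
  -- derivative bound given control of past values
  have hderiv_bound : ∀ (C : ℝ) (i : Fin N) (t : ℝ), A ≤ t →
      (∀ j, ∀ σ ∈ Icc (((n : ℝ) - 1) * τ) t, a j σ ≤ C) →
      ((N : ℝ) - 1)⁻¹ * ∑ j ∈ Finset.univ.erase i,
          ψ i j t * (a j (t - τd i j t) - a i t) ≤ C - a i t := by
    intro C i t htA hpast
    have ht0 : (0 : ℝ) ≤ t := le_trans hA0 htA
    have hait : a i t ≤ C := hpast i t ⟨by nlinarith, le_rfl⟩
    have hterm : ∀ j ∈ Finset.univ.erase i,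
        ψ i j t * (a j (t - τd i j t) - a i t) ≤ C - a i t := by
      intro j _
      have hd := hτd i j t ht0
      have hdel : a j (t - τd i j t) ≤ C := by
        apply hpast j
        constructor
        · have := hd.2; nlinarith
        · have := hd.1; linarith
      exact psi_term_bound (hψ i j t ht0).1 (hψ i j t ht0).2 hdel hait
    have hsum : ∑ j ∈ Finset.univ.erase i, ψ i j t * (a j (t - τd i j t) - a i t)
        ≤ (Finset.univ.erase i).card • (C - a i t) :=
      Finset.sum_le_card_nsmul _ _ _ hterm
    have hcard : ((Finset.univ.erase i).card : ℝ) = (N : ℝ) - 1 := by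
      rw [Finset.card_erase_of_mem (Finset.mem_univ i), Finset.card_univ, Fintype.card_fin]
      have h1N : 1 ≤ N := le_trans one_le_two hN
      push_cast [Nat.cast_sub h1N]
      ring
    rw [nsmul_eq_mul, hcard] at hsum
    have hCpos : 0 ≤ C - a i t := by linarith
    calc ((N : ℝ) - 1)⁻¹ * ∑ j ∈ Finset.univ.erase i, ψ i j t * (a j (t - τd i j t) - a i t)
        ≤ ((N : ℝ) - 1)⁻¹ * (((N : ℝ) - 1) * (C - a i t)) := by
          apply mul_le_mul_of_nonneg_left hsum
          positivity
      _ = C - a i t := by field_simp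
  -- invariance
  have hinv : ∀ i, ∀ t ∈ Icc A T, a i t ≤ M := by
    have hkey : ∀ ε > (0:ℝ), ∀ t ∈ Icc A T, ∀ i, a i t ≤ M + ε := by
      intro ε hε
      by_contra hcon
      push_neg at hcon
      obtain ⟨t', ht', i', hi'⟩ := hcon
      set S : Set ℝ := {t ∈ Icc A T | ∃ i, M + ε ≤ a i t} with hS
      have hSne : S.Nonempty := ⟨t', ht', i', hi'.le⟩
      have hSclosed : IsClosed S := by
        have : S = Icc A T ∩ ⋃ i, {t | M + ε ≤ a i t} := by
          ext t; simp [hS, mem_iUnion, and_comm]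
        rw [this]
        exact isClosed_Icc.inter (isClosed_iUnion_of_finite fun i =>
          isClosed_le continuous_const (hac i))
      have hSbdd : BddBelow S := (bddBelow_Icc : BddBelow (Icc A T)).mono fun t ht => ht.1
      set t₀ : ℝ := sInf S with ht₀
      have ht₀S : t₀ ∈ S := hSclosed.csInf_mem hSne hSbdd
      obtain ⟨ht₀Icc, i, hi⟩ := ht₀S
      have haA : ∀ j, a j A ≤ M := fun j => hM j A ⟨by nlinarith, le_rfl⟩
      have hAt₀ : A < t₀ := by
        rcases lt_or_eq_of_le ht₀Icc.1 with h | h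
        · exact h
        · exfalso; have := haA i; rw [← h] at hi; linarith
      -- all values before t₀ are < M + ε
      have hbefore : ∀ t ∈ Ico A t₀, ∀ j, a j t < M + ε := by
        intro t ht j
        by_contra hc
        push_neg at hc
        have htS : t ∈ S := ⟨⟨ht.1, le_trans ht.2.le ht₀Icc.2⟩, j, hc⟩
        exact absurd (csInf_le hSbdd htS) (not_le.mpr ht.2)
      have hle : ∀ t ∈ Icc A t₀, ∀ j, a j t ≤ M + ε := by
        intro t ht j
        rcases lt_or_eq_of_le ht.2 with h | h
        · exact (hbefore t ⟨ht.1, h⟩ j).le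
        · rw [h]
          have htend : Filter.Tendsto (a j) (nhdsWithin t₀ (Iio t₀)) (nhds (a j t₀)) :=
            ((hac j).continuousWithinAt)
          apply le_of_tendsto htend
          filter_upwards [Ico_mem_nhdsLT_of_mem (⟨hAt₀, le_rfl⟩ : t₀ ∈ Ioc A t₀)]
            with σ hσ using (hbefore σ hσ j).le
      have hpast : ∀ j, ∀ σ ∈ Icc (((n : ℝ) - 1) * τ) t₀, a j σ ≤ M + ε := by
        intro j σ hσ
        rcases le_total σ A with h | h
        · have := hM j σ ⟨hσ.1, h⟩; linarith
        · exact hle σ ⟨h, hσ.2⟩ j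
      -- Gronwall on [A, t₀]
      have hg := gronwall_upper (f := a i)
        (f' := fun t => ((N : ℝ) - 1)⁻¹ * ∑ j ∈ Finset.univ.erase i,
          ψ i j t * (a j (t - τd i j t) - a i t))
        (C := M + ε) (t₁ := A) (t₂ := t₀) hAt₀.le
        (fun t ht => hader i t (le_trans hA0 ht.1))
        (fun t ht => hderiv_bound (M + ε) i t ht.1
          (fun j σ hσ => hpast j σ ⟨hσ.1, le_trans hσ.2 ht.2⟩))
      have hexp : 0 < Real.exp (-(t₀ - A)) := Real.exp_pos _
      nlinarith [haA i]
    intro i t ht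
    apply le_of_forall_pos_le_add
    intro ε hε
    exact hkey ε hε t ht i
  refine ⟨hinv, ?_⟩
  -- decay
  intro i t ht
  have hpast : ∀ j, ∀ σ ∈ Icc (((n : ℝ) - 1) * τ) T, a j σ ≤ M := by
    intro j σ hσ
    rcases le_total σ A with h | h
    · exact hM j σ ⟨hσ.1, h⟩
    · exact hinv j σ ⟨h, hσ.2⟩
  exact gronwall_upper (f := a i)
    (f' := fun s => ((N : ℝ) - 1)⁻¹ * ∑ j ∈ Finset.univ.erase i,
      ψ i j s * (a j (s - τd i j s) - a i s))
    ht.2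
    (fun s hs => hader i s (le_trans hA0 (le_trans ht.1 hs.1)))
    (fun s hs => hderiv_bound M i s (le_trans ht.1 hs.1)
      (fun j σ hσ => hpast j σ ⟨hσ.1, le_trans hσ.2 hs.2⟩))

/-- Projection contraction estimate over two consecutive windows for the
delayed Hegselmann–Krause system. -/
theorem hk_projection_contraction {d N : ℕ} (hN : 2 ≤ N) (τ : ℝ) (hτ : 0 < τ)
    (x : Fin N → ℝ → EuclideanSpace ℝ (Fin d))
    (ψ : Fin N → Fin N → ℝ → ℝ) (τd : Fin N → Fin N → ℝ → ℝ)
    (hxc : ∀ i, Continuous (x i))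
    (hψ : ∀ i j t, 0 ≤ t → ψ i j t ∈ Icc (0 : ℝ) 1)
    (hψc : ∀ i j, Continuous (ψ i j))
    (hτd : ∀ i j t, 0 ≤ t → τd i j t ∈ Icc (0 : ℝ) τ)
    (hτdc : ∀ i j, Continuous (τd i j))
    (hode : ∀ i, ∀ t : ℝ, 0 ≤ t →
      HasDerivAt (x i)
        (((N : ℝ) - 1)⁻¹ • ∑ j ∈ Finset.univ.erase i,
          ψ i j t • (x j (t - τd i j t) - x i t)) t)
    (y : EuclideanSpace ℝ (Fin d)) (hy : ‖y‖ = 1) (n : ℕ) :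
    ∀ i j, ∀ s ∈ Icc ((n : ℝ) * τ) (((n : ℝ) + 2) * τ),
      ∀ t ∈ Icc ((n : ℝ) * τ) (((n : ℝ) + 2) * τ),
      @inner ℝ _ _ (x i (((n : ℝ) + 2) * τ) - x j (((n : ℝ) + 2) * τ)) y ≤
        Real.exp (-(2 * τ)) * @inner ℝ _ _ (x i t - x j s) y +
          (1 - Real.exp (-(2 * τ))) * winDiam x τ n := by
  have hNpos : 0 < N := by omega
  have hlohi : ((n : ℝ) - 1) * τ ≤ (n : ℝ) * τ := by nlinarith
  set lo : ℝ := ((n : ℝ) - 1) * τ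
  set hi : ℝ := (n : ℝ) * τ
  have i0 : Fin N := ⟨0, hNpos⟩
  -- The sup bound M for a direction z
  have hMfact : ∀ z : EuclideanSpace ℝ (Fin d), ∃ M : ℝ,
      (∀ i, ∀ σ ∈ Icc lo hi, @inner ℝ _ _ (x i σ) z ≤ M) ∧
      (∀ B : ℝ, (∀ i, ∀ σ ∈ Icc lo hi, @inner ℝ _ _ (x i σ) z ≤ B) → M ≤ B) := by
    intro z
    set S : Set ℝ := {r : ℝ | ∃ i, ∃ σ ∈ Icc lo hi, r = @inner ℝ _ _ (x i σ) z} with hS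
    have hbdd : BddAbove S :=
      bdd_above_helper (fun i σ => @inner ℝ _ _ (x i σ) z)
        (fun i => (hxc i).inner continuous_const) lo hi
    have hne : S.Nonempty := ⟨@inner ℝ _ _ (x i0 hi) z, i0, hi, ⟨hlohi, le_rfl⟩, rfl⟩
    refine ⟨sSup S, ?_, ?_⟩
    · intro i σ hσ
      exact le_csSup hbdd ⟨i, σ, hσ, rfl⟩
    · intro B hB
      apply csSup_le hne
      rintro r ⟨i, σ, hσ, rfl⟩
      exact hB i σ hσ
  obtain ⟨M, hM, hMsmall⟩ := hMfact y
  obtain ⟨M', hM', hMsmall'⟩ := hMfact (-y)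
  -- K bounds norms
  have hbddK : BddAbove {r : ℝ | ∃ i j, ∃ s ∈ Icc lo hi, ∃ t ∈ Icc lo hi,
      r = ‖x i s - x j t‖} := by
    apply bdd_above_helper2 (fun i j s t => ‖x i s - x j t‖)
    intro i j
    exact (((hxc i).comp continuous_fst).sub ((hxc j).comp continuous_snd)).norm
  have hKnorm : ∀ i j, ∀ s ∈ Icc lo hi, ∀ t ∈ Icc lo hi, ‖x i s - x j t‖ ≤ winDiam x τ n :=
    fun i j s hs t ht => le_csSup hbddK ⟨i, j, s, hs, t, ht, rfl⟩
  have hMM'K : M + M' ≤ winDiam x τ n := by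
    have h1 : M ≤ winDiam x τ n - M' := by
      apply hMsmall
      intro i σ hσ
      have h2 : M' ≤ winDiam x τ n - @inner ℝ _ _ (x i σ) y := by
        apply hMsmall'
        intro j σ' hσ'
        have hle : @inner ℝ _ _ (x i σ - x j σ') y ≤ ‖x i σ - x j σ'‖ := by
          calc @inner ℝ _ _ (x i σ - x j σ') y ≤ ‖x i σ - x j σ'‖ * ‖y‖ :=
                real_inner_le_norm _ _
            _ = ‖x i σ - x j σ'‖ := by rw [hy, mul_one]
        have hKn := hKnorm i j σ hσ σ' hσ'
        rw [inner_sub_left] at hle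
        rw [inner_neg_right]
        linarith
      linarith
    linarith
  obtain ⟨hinv₁, hdec₁⟩ := hk_decay hN hτ x ψ τd hxc hψ hτd hode y n M hM
  obtain ⟨hinv₂, hdec₂⟩ := hk_decay hN hτ x ψ τd hxc hψ hτd hode (-y) n M' hM'
  intro i j s hs t ht
  have h1 := hdec₁ i t ht
  have h2 := hdec₂ j s hs
  have hb := hinv₁ i t ht
  have hc := hinv₂ j s hs
  rw [inner_neg_right] at hc
  rw [inner_neg_right, inner_neg_right] at h2
  have hnt : (n : ℝ) * τ ≤ t := ht.1
  have hns : (n : ℝ) * τ ≤ s := hs.1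
  have htT : t ≤ ((n : ℝ) + 2) * τ := ht.2
  have hsT : s ≤ ((n : ℝ) + 2) * τ := hs.2
  have hβα : Real.exp (-(2 * τ)) ≤ Real.exp (-(((n : ℝ) + 2) * τ - t)) :=
    Real.exp_le_exp.mpr (by linarith)
  have hβγ : Real.exp (-(2 * τ)) ≤ Real.exp (-(((n : ℝ) + 2) * τ - s)) :=
    Real.exp_le_exp.mpr (by linarith)
  have hβ1 : Real.exp (-(2 * τ)) ≤ 1 := by
    rw [show (1:ℝ) = Real.exp 0 by rw [Real.exp_zero]]
    exact Real.exp_le_exp.mpr (by linarith)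
  rw [inner_sub_left, inner_sub_left]
  have p1 : 0 ≤ (Real.exp (-(((n : ℝ) + 2) * τ - t)) - Real.exp (-(2 * τ)))
      * (M - @inner ℝ _ _ (x i t) y) :=
    mul_nonneg (by linarith) (by linarith)
  have p2 : 0 ≤ (Real.exp (-(((n : ℝ) + 2) * τ - s)) - Real.exp (-(2 * τ)))
      * (M' + @inner ℝ _ _ (x j s) y) :=
    mul_nonneg (by linarith) (by linarith)
  have p3 : 0 ≤ (1 - Real.exp (-(2 * τ))) * (winDiam x τ n - M - M') :=
    mul_nonneg (by linarith) (by linarith)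
  nlinarith [h1, h2, p1, p2, p3]
end

section
/- For the delayed Hegselmann–Krause system with delays bounded by τ and weights in [0,1], the group diameter d_x(t) = max_{i,j} |x_i(t) − x_j(t)| satisfies K_{n+1} ≤ e^{−τ} d_x(nτ) + (1 − e^{−τ}) K_n for all n ∈ ℕ, where K_n = max_{s,t ∈ [(n−1)τ, nτ]} max_{i,j} |x_i(s) − x_j(t)|. -/
open Set

open Filter

lemma sum_bound_aux {N : ℕ} (hN : 2 ≤ N) (i : Fin N) (w v : Fin N → ℝ) (fi M : ℝ)
    (hw : ∀ j, 0 ≤ w j ∧ w j ≤ 1) (hv : ∀ j, v j ≤ M) (hfi : fi ≤ M) :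
    ((N : ℝ) - 1)⁻¹ * ∑ j ∈ Finset.univ.erase i, w j * (v j - fi) ≤ M - fi := by
  have hN1 : (0:ℝ) < (N:ℝ) - 1 := by
    have : (2:ℝ) ≤ (N:ℝ) := by exact_mod_cast hN
    linarith
  have hterm : ∀ j, w j * (v j - fi) ≤ M - fi := by
    intro j
    rcases le_or_gt (v j) fi with h | h
    · nlinarith [(hw j).1, (hw j).2]
    · nlinarith [(hw j).1, (hw j).2, hv j]
  have hcard : ((Finset.univ.erase i).card : ℝ) = (N:ℝ) - 1 := by
    rw [Finset.card_erase_of_mem (Finset.mem_univ i), Finset.card_univ, Fintype.card_fin]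
    push_cast [Nat.cast_sub (by omega : 1 ≤ N)]
    ring
  have hsum : ∑ j ∈ Finset.univ.erase i, w j * (v j - fi) ≤ ((N:ℝ) - 1) * (M - fi) := by
    calc ∑ j ∈ Finset.univ.erase i, w j * (v j - fi)
        ≤ ∑ _j ∈ Finset.univ.erase i, (M - fi) := Finset.sum_le_sum fun j _ => hterm j
      _ = ((N:ℝ) - 1) * (M - fi) := by rw [Finset.sum_const, nsmul_eq_mul, hcard]
  calc ((N : ℝ) - 1)⁻¹ * ∑ j ∈ Finset.univ.erase i, w j * (v j - fi)
      ≤ ((N : ℝ) - 1)⁻¹ * (((N:ℝ) - 1) * (M - fi)) :=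
        mul_le_mul_of_nonneg_left hsum (by positivity)
    _ = M - fi := by field_simp

lemma gronwall_aux (f g : ℝ → ℝ) (a b P : ℝ) (hab : a < b)
    (hd : ∀ t ∈ Icc a b, HasDerivAt f (g t) t)
    (hg : ∀ t ∈ Icc a b, g t ≤ P - f t) :
    ∀ t ∈ Icc a b, f t ≤ P + Real.exp (-(t - a)) * (f a - P) := by
  set h : ℝ → ℝ := fun u => (f u - P) * Real.exp (u - a) with hh
  have hder : ∀ t ∈ Icc a b, HasDerivAt h ((g t + (f t - P)) * Real.exp (t - a)) t := by
    intro t ht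
    have h1 : HasDerivAt (fun u => f u - P) (g t) t := (hd t ht).sub_const P
    have h2 : HasDerivAt (fun u => Real.exp (u - a)) (Real.exp (t - a)) t := by
      have := (Real.hasDerivAt_exp (t - a)).comp t ((hasDerivAt_id t).sub_const a)
      simpa [Function.comp_def] using this
    have := h1.mul h2
    rw [show (g t + (f t - P)) * Real.exp (t - a) = g t * Real.exp (t - a) + (f t - P) * Real.exp (t - a) by ring]
    exact this
  have hanti : AntitoneOn h (Icc a b) := by
    apply antitoneOn_of_deriv_nonpos (convex_Icc a b)
    · exact fun t ht => (hder t ht).continuousAt.continuousWithinAt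
    · intro t ht
      rw [interior_Icc] at ht
      exact (hder t (Ioo_subset_Icc_self ht)).differentiableAt.differentiableWithinAt
    · intro t ht
      rw [interior_Icc] at ht
      have ht' := Ioo_subset_Icc_self ht
      rw [(hder t ht').deriv]
      have := hg t ht'
      nlinarith [Real.exp_pos (t - a)]
  intro t ht
  have hle := hanti (left_mem_Icc.2 hab.le) ht ht.1
  have hha : h a = f a - P := by simp [hh]
  rw [hha] at hle
  have hex : (0:ℝ) < Real.exp (t - a) := Real.exp_pos _
  have h2 : f t - P ≤ (f a - P) / Real.exp (t - a) := (le_div_iff₀ hex).2 hle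
  have h3 : (f a - P) / Real.exp (t - a) = Real.exp (-(t - a)) * (f a - P) := by
    rw [Real.exp_neg]
    ring
  linarith [h2.trans_eq h3]

lemma barrier_lemma {ι : Type*} [Fintype ι] [Nonempty ι]
    (f g : ι → ℝ → ℝ) (a b P ε : ℝ) (hab : a ≤ b) (hε : 0 < ε)
    (hf : ∀ i, Continuous (f i))
    (hd : ∀ i, ∀ t ∈ Icc a b, HasDerivAt (f i) (g i t) t)
    (hkey : ∀ i, ∀ t ∈ Icc a b,
      (∀ j, ∀ s ∈ Icc a t, f j s ≤ P + ε * Real.exp (s - a)) →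
      f i t = P + ε * Real.exp (t - a) → g i t ≤ 0)
    (hinit : ∀ i, f i a ≤ P) :
    ∀ t ∈ Icc a b, ∀ i, f i t ≤ P + ε * Real.exp (t - a) := by
  set B : ℝ → ℝ := fun u => P + ε * Real.exp (u - a) with hBdef
  have hBc : Continuous B := by
    exact continuous_const.add (continuous_const.mul
      (Real.continuous_exp.comp (continuous_id.sub continuous_const)))
  have hPltB : ∀ u, P < B u := fun u => by
    have : 0 < ε * Real.exp (u - a) := by positivity
    simp only [hBdef]; linarith
  set S : Set ℝ := {t | t ∈ Icc a b ∧ ∀ s ∈ Icc a t, ∀ i, f i s ≤ B s} with hSdef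
  have haS : a ∈ S := by
    refine ⟨⟨le_refl a, hab⟩, fun s hs i => ?_⟩
    have : s = a := le_antisymm hs.2 hs.1
    subst this
    exact (hinit i).trans (hPltB s).le
  have hSb : BddAbove S := ⟨b, fun t ht => ht.1.2⟩
  set c := sSup S with hc
  have hac : a ≤ c := le_csSup hSb haS
  have hcb : c ≤ b := csSup_le ⟨a, haS⟩ fun t ht => ht.1.2
  have hlt : ∀ s, a ≤ s → s < c → ∀ i, f i s ≤ B s := by
    intro s has hsc i
    obtain ⟨t, htS, hst⟩ := exists_lt_of_lt_csSup ⟨a, haS⟩ hsc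
    exact htS.2 s ⟨has, hst.le⟩ i
  have hcS : c ∈ S := by
    refine ⟨⟨hac, hcb⟩, fun s hs i => ?_⟩
    rcases lt_or_eq_of_le hs.2 with h | h
    · exact hlt s hs.1 h i
    · rw [h]
      rcases eq_or_lt_of_le hac with h2 | h2
      · rw [← h2]
        exact (hinit i).trans (hPltB a).le
      · have hev : ∀ᶠ u in nhdsWithin c (Iio c), f i u ≤ B u := by
          filter_upwards [Ioo_mem_nhdsLT_of_mem (show c ∈ Ioc a c from ⟨h2, le_refl c⟩)]
            with u hu
          exact hlt u hu.1.le hu.2 i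
        have hten : Tendsto (fun u => B u - f i u) (nhdsWithin c (Iio c))
            (nhds (B c - f i c)) :=
          ((hBc.sub (hf i)).tendsto c).mono_left nhdsWithin_le_nhds
        have h0 : 0 ≤ B c - f i c :=
          ge_of_tendsto hten (hev.mono fun u hu => sub_nonneg.2 hu)
        linarith
  rcases eq_or_lt_of_le hcb with hcb' | hcb'
  · intro t ht i
    exact hcS.2 t ⟨ht.1, ht.2.trans_eq hcb'.symm⟩ i
  · exfalso
    have hstep : ∀ i, ∃ u, c < u ∧ ∀ s ∈ Ioc c u, f i s ≤ B s := by
      intro i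
      have hfiB : f i c ≤ B c := hcS.2 c ⟨hac, le_refl c⟩ i
      rcases eq_or_lt_of_le hfiB with heq | hlt2
      · have hgle : g i c ≤ 0 := hkey i c ⟨hac, hcb⟩ (fun j s hs => hcS.2 s hs j) heq
        have hslope := hasDerivAt_iff_tendsto_slope.1 (hd i c ⟨hac, hcb⟩)
        set r := ε * Real.exp (c - a) with hr
        have hrpos : 0 < r := by positivity
        have hs2 : Tendsto (slope (f i) c) (nhdsWithin c (Ioi c)) (nhds (g i c)) :=
          hslope.mono_left (nhdsWithin_mono c fun u hu => ne_of_gt hu)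
        have hev : ∀ᶠ u in nhdsWithin c (Ioi c), slope (f i) c u < r :=
          hs2.eventually_lt_const (lt_of_le_of_lt hgle hrpos)
        rw [eventually_iff, mem_nhdsGT_iff_exists_Ioc_subset] at hev
        obtain ⟨u, hu, hsub⟩ := hev
        refine ⟨u, hu, fun s hs => ?_⟩
        have hsl : slope (f i) c s < r := hsub hs
        have hsc : c < s := hs.1
        have hsl' : (f i s - f i c) / (s - c) < r := by
          rw [slope_def_field] at hsl; exact hsl
        have hmul := (div_lt_iff₀ (show (0:ℝ) < s - c by linarith)).1 hsl'
        have h1 : f i s ≤ f i c + (s - c) * r := by nlinarith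
        have h2 : B c + (s - c) * r ≤ B s := by
          have hx := Real.add_one_le_exp (s - c)
          have hexp : Real.exp (c - a) * Real.exp (s - c) = Real.exp (s - a) := by
            rw [← Real.exp_add]; ring_nf
          simp only [hBdef, hr]
          nlinarith [Real.exp_pos (c - a)]
        rw [heq] at h1
        linarith
      · have hev : ∀ᶠ u in nhds c, f i u < B u :=
          ContinuousAt.eventually_lt (hf i).continuousAt hBc.continuousAt hlt2
        have hev2 : {u | f i u ≤ B u} ∈ nhdsWithin c (Ioi c) :=
          mem_nhdsWithin_of_mem_nhds (hev.mono fun u hu => hu.le)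
        rw [mem_nhdsGT_iff_exists_Ioc_subset] at hev2
        obtain ⟨u, hu, hsub⟩ := hev2
        exact ⟨u, hu, fun s hs => hsub hs⟩
    choose u hu hub using hstep
    have hne : (Finset.univ : Finset ι).Nonempty := Finset.univ_nonempty
    set c' := min (Finset.univ.inf' hne u) b with hc'
    have hcc' : c < c' := lt_min (by rw [Finset.lt_inf'_iff]; exact fun i _ => hu i) hcb'
    have hc'S : c' ∈ S := by
      refine ⟨⟨hac.trans hcc'.le, min_le_right _ _⟩, fun s hs i => ?_⟩
      rcases le_or_gt s c with h | h
      · exact hcS.2 s ⟨hs.1, h⟩ i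
      · refine hub i s ⟨h, hs.2.trans ?_⟩
        exact le_trans (min_le_left _ _) (Finset.inf'_le u (Finset.mem_univ i))
    exact absurd (le_csSup hSb hc'S) (not_le.2 hcc')

lemma key_lemma {d N : ℕ} (hN : 2 ≤ N) (τ : ℝ) (hτ : 0 < τ)
    (x : Fin N → ℝ → EuclideanSpace ℝ (Fin d))
    (ψ τd : Fin N → Fin N → ℝ → ℝ)
    (hxc : ∀ i, Continuous (x i))
    (hψ : ∀ i j t, 0 ≤ t → ψ i j t ∈ Icc (0 : ℝ) 1)
    (hτd : ∀ i j t, 0 ≤ t → τd i j t ∈ Icc (0 : ℝ) τ)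
    (hode : ∀ i, ∀ t : ℝ, 0 ≤ t →
      HasDerivAt (x i)
        (((N : ℝ) - 1)⁻¹ • ∑ j ∈ Finset.univ.erase i,
          ψ i j t • (x j (t - τd i j t) - x i t)) t)
    (n : ℕ) (ℓ : EuclideanSpace ℝ (Fin d)) :
    ∃ j0 : Fin N, ∃ s0 ∈ Icc (((n : ℝ) - 1) * τ) ((n : ℝ) * τ),
      ∀ i, ∀ t ∈ Icc ((n : ℝ) * τ) (((n : ℝ) + 1) * τ),
        (inner ℝ ℓ (x i t) : ℝ) ≤
          (1 - Real.exp (-τ)) * (inner ℝ ℓ (x j0 s0) : ℝ)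
            + Real.exp (-τ) * (inner ℝ ℓ (x i ((n : ℝ) * τ)) : ℝ) := by
  haveI : Nonempty (Fin N) := ⟨⟨0, by omega⟩⟩
  set a : ℝ := (n : ℝ) * τ with ha
  set b : ℝ := ((n : ℝ) + 1) * τ with hb
  set lo : ℝ := ((n : ℝ) - 1) * τ with hlo
  have ha0 : 0 ≤ a := mul_nonneg (Nat.cast_nonneg n) hτ.le
  have hab : a < b := by
    have : b = a + τ := by rw [ha, hb]; ring
    linarith
  have hloa : lo ≤ a := by
    have : lo = a - τ := by rw [ha, hlo]; ring
    linarith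
  set f : Fin N → ℝ → ℝ := fun i u => (inner ℝ ℓ (x i u) : ℝ) with hfdef
  set G : Fin N → ℝ → ℝ := fun i t => ((N : ℝ) - 1)⁻¹ *
    ∑ j ∈ Finset.univ.erase i, ψ i j t * (f j (t - τd i j t) - f i t) with hGdef
  have hf : ∀ i, Continuous (f i) := fun i => continuous_const.inner (hxc i)
  have hG : ∀ i t, 0 ≤ t → HasDerivAt (f i) (G i t) t := by
    intro i t ht
    have h0 := (innerSL ℝ ℓ).hasFDerivAt.comp_hasDerivAt t (hode i t ht)
    have heq : (innerSL ℝ ℓ) (((N : ℝ) - 1)⁻¹ • ∑ j ∈ Finset.univ.erase i,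
        ψ i j t • (x j (t - τd i j t) - x i t)) = G i t := by
      simp only [innerSL_apply_apply, hGdef, real_inner_smul_right, inner_sum, inner_sub_right,
        hfdef]
    rw [heq] at h0
    exact h0
  -- delayed times stay in [lo, t]
  have hdel : ∀ i j t, t ∈ Icc a b → lo ≤ t - τd i j t ∧ t - τd i j t ≤ t := by
    intro i j t ht
    obtain ⟨h1, h2⟩ := hτd i j t (ha0.trans ht.1)
    constructor
    · have : lo = a - τ := by rw [ha, hlo]; ring
      have := ht.1
      linarith
    · linarith
  -- maximum over the previous window
  choose sj hsjJ hsjmax using fun j =>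
    isCompact_Icc.exists_isMaxOn (Set.nonempty_Icc.2 hloa) ((hf j).continuousOn (s := Icc lo a))
  obtain ⟨j0, -, hj0⟩ := Finset.exists_max_image Finset.univ (fun j => f j (sj j))
    Finset.univ_nonempty
  set P := f j0 (sj j0) with hP0
  have hP : ∀ j, ∀ u ∈ Icc lo a, f j u ≤ P :=
    fun j u hu => le_trans (hsjmax j hu) (hj0 j (Finset.mem_univ j))
  -- Claim 1 : invariance
  have hclaim1 : ∀ t ∈ Icc a b, ∀ i, f i t ≤ P := by
    have hbar : ∀ ε : ℝ, 0 < ε → ∀ t ∈ Icc a b, ∀ i, f i t ≤ P + ε * Real.exp (t - a) := by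
      intro ε hε
      apply barrier_lemma f G a b P ε hab.le hε hf (fun i t ht => hG i t (ha0.trans ht.1))
        ?_ (fun i => hP i a ⟨hloa, le_refl a⟩)
      intro i t ht hprev hcross
      have hr : (0:ℝ) ≤ ((N : ℝ) - 1)⁻¹ := by
        have : (2:ℝ) ≤ (N:ℝ) := by exact_mod_cast hN
        exact inv_nonneg.2 (by linarith)
      have hsum : ∑ j ∈ Finset.univ.erase i, ψ i j t * (f j (t - τd i j t) - f i t) ≤ 0 := by
        apply Finset.sum_nonpos
        intro j _
        have hψt := hψ i j t (ha0.trans ht.1)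
        have hdd := hdel i j t ht
        have hval : f j (t - τd i j t) ≤ P + ε * Real.exp (t - a) := by
          rcases le_or_gt (t - τd i j t) a with h | h
          · have h1 : f j (t - τd i j t) ≤ P := hP j _ ⟨hdd.1, h⟩
            have : (0:ℝ) < ε * Real.exp (t - a) := by positivity
            linarith
          · have h1 := hprev j (t - τd i j t) ⟨h.le, hdd.2⟩
            have h2 : Real.exp (t - τd i j t - a) ≤ Real.exp (t - a) :=
              Real.exp_le_exp.2 (by linarith [hdd.2])
            nlinarith
        rw [hcross] at *
        exact mul_nonpos_iff.2 (Or.inl ⟨hψt.1, by linarith⟩)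
      rw [hGdef]
      exact mul_nonpos_iff.2 (Or.inl ⟨hr, hsum⟩)
    intro t ht i
    apply le_of_forall_pos_le_add
    intro ε hε
    have h := hbar (ε / Real.exp (t - a)) (by positivity) t ht i
    rw [div_mul_cancel₀ _ (Real.exp_ne_zero _)] at h
    exact h
  -- Gronwall step
  have hgr : ∀ i, ∀ t ∈ Icc a b, f i t ≤ P + Real.exp (-(t - a)) * (f i a - P) := by
    intro i
    apply gronwall_aux (f i) (G i) a b P hab (fun t ht => hG i t (ha0.trans ht.1))
    intro t ht
    rw [hGdef]
    apply sum_bound_aux hN i (fun j => ψ i j t) (fun j => f j (t - τd i j t)) (f i t) P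
      (fun j => (hψ i j t (ha0.trans ht.1) : _)) ?_ (hclaim1 t ht i)
    intro j
    have hdd := hdel i j t ht
    rcases le_or_gt (t - τd i j t) a with h | h
    · exact hP j _ ⟨hdd.1, h⟩
    · exact hclaim1 (t - τd i j t) ⟨h.le, hdd.2.trans ht.2⟩ j
  refine ⟨j0, sj j0, hsjJ j0, ?_⟩
  intro i t ht
  have h1 := hgr i t ht
  have h2 : f i a ≤ P := hP i a ⟨hloa, le_refl a⟩
  have h3 : Real.exp (-τ) ≤ Real.exp (-(t - a)) := by
    apply Real.exp_le_exp.2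
    have : b = a + τ := by rw [ha, hb]; ring
    have := ht.2
    linarith
  have h4 : Real.exp (-(t - a)) * (f i a - P) ≤ Real.exp (-τ) * (f i a - P) := by
    nlinarith
  have h5 : (1 - Real.exp (-τ)) * P + Real.exp (-τ) * (f i a) =
      P + Real.exp (-τ) * (f i a - P) := by ring
  show f i t ≤ (1 - Real.exp (-τ)) * P + Real.exp (-τ) * (f i a)
  linarith

/-- Relation between the window diameter and the instantaneous group
diameter for the delayed Hegselmann–Krause system. -/
theorem hk_winDiam_diameter {d N : ℕ} (hN : 2 ≤ N) (τ : ℝ) (hτ : 0 < τ)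
    (x : Fin N → ℝ → EuclideanSpace ℝ (Fin d))
    (ψ : Fin N → Fin N → ℝ → ℝ) (τd : Fin N → Fin N → ℝ → ℝ)
    (hxc : ∀ i, Continuous (x i))
    (hψ : ∀ i j t, 0 ≤ t → ψ i j t ∈ Icc (0 : ℝ) 1)
    (hψc : ∀ i j, Continuous (ψ i j))
    (hτd : ∀ i j t, 0 ≤ t → τd i j t ∈ Icc (0 : ℝ) τ)
    (hτdc : ∀ i j, Continuous (τd i j))
    (hode : ∀ i, ∀ t : ℝ, 0 ≤ t →
      HasDerivAt (x i)
        (((N : ℝ) - 1)⁻¹ • ∑ j ∈ Finset.univ.erase i,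
          ψ i j t • (x j (t - τd i j t) - x i t)) t) :
    ∀ n : ℕ, winDiam x τ (n + 1) ≤
      Real.exp (-τ) * (⨆ i : Fin N, ⨆ j : Fin N, ‖x i ((n : ℝ) * τ) - x j ((n : ℝ) * τ)‖) +
        (1 - Real.exp (-τ)) * winDiam x τ n := by
  intro n
  haveI : Nonempty (Fin N) := ⟨⟨0, by omega⟩⟩
  set a : ℝ := (n : ℝ) * τ with ha
  have hloa : ((n : ℝ) - 1) * τ ≤ a := by
    have : ((n : ℝ) - 1) * τ = a - τ := by rw [ha]; ring
    linarith
  -- bounds for the previous window set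
  obtain ⟨C, hC⟩ : ∃ C, ∀ i, ∀ u ∈ Icc (((n : ℝ) - 1) * τ) a, ‖x i u‖ ≤ C := by
    choose Ci hCi using fun i =>
      isCompact_Icc.exists_bound_of_continuousOn
        ((hxc i).continuousOn (s := Icc (((n : ℝ) - 1) * τ) a))
    exact ⟨Finset.univ.sup' Finset.univ_nonempty Ci, fun i u hu =>
      (hCi i u hu).trans (Finset.le_sup' _ (Finset.mem_univ i))⟩
  have hbdd : BddAbove {r : ℝ | ∃ i j, ∃ s ∈ Icc (((n : ℝ) - 1) * τ) ((n : ℝ) * τ),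
      ∃ t ∈ Icc (((n : ℝ) - 1) * τ) ((n : ℝ) * τ), r = ‖x i s - x j t‖} := by
    refine ⟨C + C, ?_⟩
    rintro r ⟨i, j, s, hs, t, ht, rfl⟩
    calc ‖x i s - x j t‖ ≤ ‖x i s‖ + ‖x j t‖ := norm_sub_le _ _
      _ ≤ C + C := add_le_add (hC i s hs) (hC j t ht)
  have hKn_mem : ∀ (i j : Fin N) (s t : ℝ), s ∈ Icc (((n : ℝ) - 1) * τ) ((n : ℝ) * τ) →
      t ∈ Icc (((n : ℝ) - 1) * τ) ((n : ℝ) * τ) → ‖x i s - x j t‖ ≤ winDiam x τ n := by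
    intro i j s t hs ht
    exact le_csSup hbdd ⟨i, j, s, hs, t, ht, rfl⟩
  have hKn0 : 0 ≤ winDiam x τ n := by
    have := hKn_mem ⟨0, by omega⟩ ⟨0, by omega⟩ a a ⟨hloa, le_refl a⟩ ⟨hloa, le_refl a⟩
    simpa using this
  -- supremum diameter at time a
  have hD1 : ∀ i j : Fin N, ‖x i a - x j a‖ ≤
      ⨆ i' : Fin N, ⨆ j' : Fin N, ‖x i' a - x j' a‖ := by
    intro i j
    have h1 : ‖x i a - x j a‖ ≤ ⨆ j' : Fin N, ‖x i a - x j' a‖ :=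
      le_ciSup (f := fun j' : Fin N => ‖x i a - x j' a‖)
        (Set.Finite.bddAbove (Set.finite_range _)) j
    exact h1.trans (le_ciSup (f := fun i' : Fin N => ⨆ j' : Fin N, ‖x i' a - x j' a‖)
      (Set.Finite.bddAbove (Set.finite_range _)) i)
  have hD0 : 0 ≤ ⨆ i' : Fin N, ⨆ j' : Fin N, ‖x i' a - x j' a‖ := by
    have := hD1 ⟨0, by omega⟩ ⟨0, by omega⟩
    simpa using this
  have hexp0 : (0:ℝ) < Real.exp (-τ) := Real.exp_pos _
  have hexp1 : Real.exp (-τ) ≤ 1 := by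
    rw [Real.exp_le_one_iff]
    linarith
  have hRHS0 : 0 ≤ Real.exp (-τ) * (⨆ i' : Fin N, ⨆ j' : Fin N, ‖x i' a - x j' a‖) +
      (1 - Real.exp (-τ)) * winDiam x τ n := by
    have := mul_nonneg hexp0.le hD0
    have := mul_nonneg (by linarith : (0:ℝ) ≤ 1 - Real.exp (-τ)) hKn0
    linarith
  rw [winDiam]
  apply Real.sSup_le _ hRHS0
  rintro r ⟨i, j, s, hs, t, ht, rfl⟩
  -- clean up the casts in hs, ht
  have hcast : ((n + 1 : ℕ) : ℝ) = (n : ℝ) + 1 := by push_cast; ring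
  have hs' : s ∈ Icc ((n : ℝ) * τ) (((n : ℝ) + 1) * τ) := by
    rw [hcast] at hs
    refine ⟨?_, hs.2⟩
    calc (n : ℝ) * τ = ((n : ℝ) + 1 - 1) * τ := by ring
      _ ≤ s := hs.1
  have ht' : t ∈ Icc ((n : ℝ) * τ) (((n : ℝ) + 1) * τ) := by
    rw [hcast] at ht
    refine ⟨?_, ht.2⟩
    calc (n : ℝ) * τ = ((n : ℝ) + 1 - 1) * τ := by ring
      _ ≤ t := ht.1
  by_cases hv : x i s - x j t = 0
  · rw [hv, norm_zero]
    exact hRHS0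
  · set ℓ : EuclideanSpace ℝ (Fin d) := ‖x i s - x j t‖⁻¹ • (x i s - x j t) with hℓdef
    have hℓ : ‖ℓ‖ = 1 := norm_smul_inv_norm hv
    obtain ⟨j0, s0, hs0, H⟩ := key_lemma hN τ hτ x ψ τd hxc hψ hτd hode n ℓ
    obtain ⟨j1, s1, hs1, H'⟩ := key_lemma hN τ hτ x ψ τd hxc hψ hτd hode n (-ℓ)
    have hA := H i s hs'
    have hB := H' j t ht'
    rw [inner_neg_left, inner_neg_left, inner_neg_left] at hB
    have hnv : ‖x i s - x j t‖ ≠ 0 := norm_ne_zero_iff.2 hv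
    have hnorm : (inner ℝ ℓ (x i s - x j t) : ℝ) = ‖x i s - x j t‖ := by
      rw [hℓdef, real_inner_smul_left, real_inner_self_eq_norm_mul_norm]
      field_simp
    have hsplit : (inner ℝ ℓ (x i s) : ℝ) - (inner ℝ ℓ (x j t) : ℝ) = ‖x i s - x j t‖ := by
      rw [← inner_sub_right]
      exact hnorm
    have hb1 : (inner ℝ ℓ (x j0 s0 - x j1 s1) : ℝ) ≤ ‖x j0 s0 - x j1 s1‖ := by
      have := real_inner_le_norm ℓ (x j0 s0 - x j1 s1)
      rwa [hℓ, one_mul] at this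
    have hb2 : (inner ℝ ℓ (x i a - x j a) : ℝ) ≤ ‖x i a - x j a‖ := by
      have := real_inner_le_norm ℓ (x i a - x j a)
      rwa [hℓ, one_mul] at this
    have hKn : ‖x j0 s0 - x j1 s1‖ ≤ winDiam x τ n :=
      hKn_mem j0 j1 s0 s1 hs0 hs1
    have hDn : ‖x i a - x j a‖ ≤ ⨆ i' : Fin N, ⨆ j' : Fin N, ‖x i' a - x j' a‖ := hD1 i j
    have e1 : (inner ℝ ℓ (x j0 s0 - x j1 s1) : ℝ) =
        (inner ℝ ℓ (x j0 s0) : ℝ) - (inner ℝ ℓ (x j1 s1) : ℝ) := inner_sub_right _ _ _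
    have e2 : (inner ℝ ℓ (x i a - x j a) : ℝ) =
        (inner ℝ ℓ (x i a) : ℝ) - (inner ℝ ℓ (x j a) : ℝ) := inner_sub_right _ _ _
    have p1 : (1 - Real.exp (-τ)) * (inner ℝ ℓ (x j0 s0 - x j1 s1) : ℝ) ≤
        (1 - Real.exp (-τ)) * winDiam x τ n :=
      mul_le_mul_of_nonneg_left (hb1.trans hKn) (by linarith)
    have p2 : Real.exp (-τ) * (inner ℝ ℓ (x i a - x j a) : ℝ) ≤
        Real.exp (-τ) * (⨆ i' : Fin N, ⨆ j' : Fin N, ‖x i' a - x j' a‖) :=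
      mul_le_mul_of_nonneg_left (hb2.trans hDn) hexp0.le
    calc ‖x i s - x j t‖ = (inner ℝ ℓ (x i s) : ℝ) - (inner ℝ ℓ (x j t) : ℝ) := hsplit.symm
      _ ≤ (1 - Real.exp (-τ)) * ((inner ℝ ℓ (x j0 s0) : ℝ) - (inner ℝ ℓ (x j1 s1) : ℝ)) +
          Real.exp (-τ) * ((inner ℝ ℓ (x i a) : ℝ) - (inner ℝ ℓ (x j a) : ℝ)) := by
        nlinarith [hA, hB]
      _ = (1 - Real.exp (-τ)) * (inner ℝ ℓ (x j0 s0 - x j1 s1) : ℝ) +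
          Real.exp (-τ) * (inner ℝ ℓ (x i a - x j a) : ℝ) := by rw [e1, e2]
      _ ≤ Real.exp (-τ) * (⨆ i' : Fin N, ⨆ j' : Fin N, ‖x i' a - x j' a‖) +
          (1 - Real.exp (-τ)) * winDiam x τ n := by linarith
end
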